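/- Let φ : ℝ → ℝ be three times continuously differentiable and let x ∈ ℝ. Then the function h ↦ (1/2) [ ((φ(x+h) - φ(x))/h)² + ((φ(x) - φ(x-h))/h)² ] - (φ'(x))², defined for h ≠ 0, is O(h²) as h → 0. -/

import Mathlib

/-!
Write `D₊(h)` and `D₋(h)` for the forward and backward difference quotients. Taylor expansion
to second order gives `D₊(h) = φ' + (φ''/2) h + O(h²)` and, replacing `h` by `-h`,
`D₋(h) = φ' - (φ''/2) h + O(h²)`. Squaring, the first-order cross terms `± φ' φ'' h` have
opposite signs and cancel in the average, so `(D₊² + D₋²)/2 - φ'²` is `O(h²)`.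
-/

open Filter Topology Asymptotics

theorem taylor_isBigO_univ {E : Type*} [NormedAddCommGroup E] [NormedSpace ℝ E]
    {f : ℝ → E} {x₀ : ℝ} {n : ℕ} (hf : ContDiff ℝ (n + 1) f) :
    (fun x ↦ f x - taylorWithinEval f n Set.univ x₀ x) =O[𝓝 x₀] fun x ↦ (x - x₀) ^ (n + 1) := by
  have hlittle := (taylor_isLittleO_univ (n := n + 1) (x₀ := x₀) (by exact_mod_cast hf)).isBigO
  have hterm := ((isBigO_refl (fun x ↦ (x - x₀) ^ (n + 1)) (𝓝 x₀)).const_mul_left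
      ((n + 1 : ℝ) * n.factorial)⁻¹).smul
    (isBigO_const_one ℝ (iteratedDerivWithin (n + 1) f Set.univ x₀) (𝓝 x₀))
  simp only [smul_eq_mul, mul_one] at hterm
  refine (hlittle.add hterm).congr_left fun x ↦ ?_
  rw [taylorWithinEval_succ]
  abel

theorem taylorWithinEval_univ_two (f : ℝ → ℝ) (x h : ℝ) :
    taylorWithinEval f 2 Set.univ x (x + h) =
      f x + deriv f x * h + deriv (deriv f) x / 2 * h ^ 2 := by
  simp only [taylorWithinEval_succ, taylor_within_apply, zero_add, Finset.range_one,
    add_sub_cancel_left, iteratedDerivWithin_univ, smul_eq_mul, Finset.sum_singleton,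
    Nat.factorial_zero, Nat.cast_one, inv_one, pow_zero, mul_one, iteratedDeriv_zero, one_mul,
    CharP.cast_eq_zero, pow_one, iteratedDeriv_succ, Nat.factorial_one, Nat.reduceAdd]
  ring

theorem taylor_two_isBigO {f : ℝ → ℝ} (hf : ContDiff ℝ 3 f) (x : ℝ) :
    (fun h ↦ f (x + h) - (f x + deriv f x * h + deriv (deriv f) x / 2 * h ^ 2))
      =O[𝓝 0] fun h ↦ h ^ 3 := by
  have := (taylor_isBigO_univ (n := 2) (x₀ := x) hf).comp_tendsto
    ((continuous_const_add x).tendsto' 0 x (add_zero x))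
  simpa only [Function.comp_def, taylorWithinEval_univ_two, add_sub_cancel_left] using this

theorem Asymptotics.IsBigO.div_id_of_pow_succ {f : ℝ → ℝ} {n : ℕ}
    (hf : f =O[𝓝 0] fun h ↦ h ^ (n + 1)) :
    (fun h ↦ f h / h) =O[𝓝[≠] 0] fun h ↦ h ^ n := by
  refine ((hf.mono nhdsWithin_le_nhds).mul (isBigO_refl (fun h : ℝ ↦ h⁻¹) _)).congr'
    (.of_forall fun h ↦ div_eq_mul_inv _ _) ?_
  filter_upwards [self_mem_nhdsWithin] with h (hh : h ≠ 0)
  rw [pow_succ, mul_inv_cancel_right₀ hh]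

theorem tendsto_neg_nhdsNE_zero : Tendsto (Neg.neg : ℝ → ℝ) (𝓝[≠] 0) (𝓝[≠] 0) := by
  simpa using (continuous_neg.continuousWithinAt (s := {0}ᶜ) (x := (0 : ℝ))).tendsto_nhdsWithin
    (t := {0}ᶜ) fun _ ↦ neg_ne_zero.mpr

theorem forward_diffQuot_sub_isBigO {f : ℝ → ℝ} (hf : ContDiff ℝ 3 f) (x : ℝ) :
    (fun h ↦ (f (x + h) - f x) / h - (deriv f x + deriv (deriv f) x / 2 * h))
      =O[𝓝[≠] 0] fun h ↦ h ^ 2 := by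
  refine (taylor_two_isBigO hf x).div_id_of_pow_succ.congr' ?_ .rfl
  filter_upwards [self_mem_nhdsWithin] with h (hh : h ≠ 0)
  field_simp
  ring

theorem backward_diffQuot_sub_isBigO {f : ℝ → ℝ} (hf : ContDiff ℝ 3 f) (x : ℝ) :
    (fun h ↦ (f x - f (x - h)) / h - (deriv f x - deriv (deriv f) x / 2 * h))
      =O[𝓝[≠] 0] fun h ↦ h ^ 2 := by
  have := (forward_diffQuot_sub_isBigO hf x).comp_tendsto tendsto_neg_nhdsNE_zero
  refine (this.congr_left fun h ↦ ?_).congr_right fun h ↦ ?_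
  · simp only [Function.comp_apply, ← sub_eq_add_neg, div_neg, ← neg_div]
    ring
  · simp

theorem half_sq_add_sq_sub_sq_isBigO {l : Filter ℝ} (hl : l ≤ 𝓝 0) {a b : ℝ} {p m : ℝ → ℝ}
    (hp : (fun h ↦ p h - (a + b * h)) =O[l] fun h ↦ h ^ 2)
    (hm : (fun h ↦ m h - (a - b * h)) =O[l] fun h ↦ h ^ 2) :
    (fun h ↦ 1 / 2 * (p h ^ 2 + m h ^ 2) - a ^ 2) =O[l] fun h ↦ h ^ 2 := by
  set u := fun h ↦ p h - (a + b * h)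
  set v := fun h ↦ m h - (a - b * h)
  have hsq : (fun h : ℝ ↦ h ^ 2 * h ^ 2) =O[l] fun h ↦ h ^ 2 := by
    simpa only [← pow_add] using
      (isLittleO_pow_pow (𝕜 := ℝ) (by norm_num : 2 < 2 + 2)).isBigO.mono hl
  have hbh : (fun h ↦ b * h) =O[l] fun _ ↦ (1 : ℝ) :=
    ((isLittleO_one_iff ℝ).2 ((continuous_const_mul b).tendsto' 0 0 (mul_zero b))).isBigO.mono hl
  have hquad : (fun h ↦ b ^ 2 * h ^ 2) =O[l] fun h ↦ h ^ 2 :=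
    (isBigO_refl _ l).const_mul_left _
  have hsqs : (fun h ↦ 1 / 2 * (u h * u h + v h * v h)) =O[l] fun h ↦ h ^ 2 :=
    (((hp.mul hp).trans hsq).add ((hm.mul hm).trans hsq)).const_mul_left _
  have hlin : (fun h ↦ a * (u h + v h)) =O[l] fun h ↦ h ^ 2 :=
    (hp.add hm).const_mul_left a
  have hcross : (fun h ↦ b * h * (u h - v h)) =O[l] fun h ↦ h ^ 2 :=
    (hbh.mul (hp.sub hm)).congr_right fun h ↦ one_mul _
  refine (((hquad.add hsqs).add hlin).add hcross).congr_left fun h ↦ ?_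
  simp only [u, v]
  ring

theorem formII_gradient_square_second_order (φ : ℝ → ℝ) (hφ : ContDiff ℝ 3 φ) (x : ℝ) :
    (fun h : ℝ =>
        (1 / 2) * (((φ (x + h) - φ x) / h) ^ 2 + ((φ x - φ (x - h)) / h) ^ 2)
          - (deriv φ x) ^ 2)
      =O[𝓝[≠] (0 : ℝ)] (fun h : ℝ => h ^ 2) :=
  half_sq_add_sq_sub_sq_isBigO nhdsWithin_le_nhds
    (forward_diffQuot_sub_isBigO hφ x) (backward_diffQuot_sub_isBigO hφ x)
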